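/- Define the bilinear map Ũ : ℝ² × ℝ² → ℝ⁴ by Ũ(x, y) := (x₁y₁ + x₂y₁, x₁y₁ + x₂y₁, x₁y₂, x₂y₂), let b := (1, 1, 0, 1) ∈ ℝ⁴, and let F : ℝ² × ℝ² → ℝ be F(x, y) := (1/‖b‖²)·(½‖Ũ(x,y)‖² − ⟨b, Ũ(x,y)⟩). Let e₁ = (1,0) and e₂ = (0,1). Then: (a) Ũ(e₁, e₁) = Ũ(e₂, e₁); (b) the total derivative of F at (e₁, e₁) is zero; (c) the total derivative of F at (e₂, e₁) is nonzero. Hence a tensor represented by a stationary parameter system can also be represented by a non-stationary parameter system. -/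

import Mathlib

open scoped RealInnerProductSpace

/-- The bilinear tensor format `Ũ(x, y) = (x₁y₁ + x₂y₁, x₁y₁ + x₂y₁, x₁y₂, x₂y₂)`. -/
noncomputable def Utilde (x y : EuclideanSpace ℝ (Fin 2)) : EuclideanSpace ℝ (Fin 4) :=
  !₂[x 0 * y 0 + x 1 * y 0, x 0 * y 0 + x 1 * y 0, x 0 * y 1, x 1 * y 1]

/-- The right-hand side `b = (1, 1, 0, 1)`. -/
noncomputable def bvec : EuclideanSpace ℝ (Fin 4) := !₂[1, 1, 0, 1]

/-- The objective `F(x, y) = (1/‖b‖²)(½‖Ũ(x,y)‖² − ⟨b, Ũ(x,y)⟩)`, i.e. `f ∘ Ũ` with `A = Id`. -/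
noncomputable def Fobj (xy : EuclideanSpace ℝ (Fin 2) × EuclideanSpace ℝ (Fin 2)) : ℝ :=
  (1 / ‖bvec‖ ^ 2) * ((1 / 2) * ‖Utilde xy.1 xy.2‖ ^ 2 - ⟪bvec, Utilde xy.1 xy.2⟫)

/-!
For a bilinear `B`, the derivative of `c (½‖B(x, y)‖² − ⟪b, B(x, y)⟫)` at `(x, y)` in direction
`(u, w)` is `c ⟪B(x, y) − b, B(x, w) + B(u, y)⟫`. Both `(e₁, e₁)` and `(e₂, e₁)` are mapped by `Ũ`
to `(1, 1, 0, 0)`, where the residual `Ũ − b` is `−e₄`; so `F′(x, y)(u, w) = −(x₂w₂ + u₂y₂)/‖b‖²`,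
which vanishes identically for `x = y = e₁` but not for `x = e₂`.
-/

section QuadraticCompBilinear

variable {E F G : Type*} [NormedAddCommGroup E] [NormedSpace ℝ E] [NormedAddCommGroup F]
  [NormedSpace ℝ F] [NormedAddCommGroup G] [InnerProductSpace ℝ G]

theorem hasFDerivAt_quadratic_comp_bilinear (B : E →L[ℝ] F →L[ℝ] G) (b : G) (p : E × F) :
    HasFDerivAt (fun q : E × F => (1 / 2) * ‖B q.1 q.2‖ ^ 2 - ⟪b, B q.1 q.2⟫)
      ((innerSL ℝ (B p.1 p.2 - b)).comp (B.isBoundedBilinearMap.deriv p)) p := by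
  have hB := B.isBoundedBilinearMap.hasFDerivAt p
  refine ((hB.norm_sq.const_mul (1 / 2)).sub ((innerSL ℝ b).hasFDerivAt.comp p hB)).congr_fderiv ?_
  refine ContinuousLinearMap.ext fun v => ?_
  simp

theorem fderiv_const_mul_quadratic_comp_bilinear_apply (B : E →L[ℝ] F →L[ℝ] G) (b : G) (c : ℝ)
    (p v : E × F) :
    fderiv ℝ (fun q : E × F => c * ((1 / 2) * ‖B q.1 q.2‖ ^ 2 - ⟪b, B q.1 q.2⟫)) p v =
      c * ⟪B p.1 p.2 - b, B p.1 v.2 + B v.1 p.2⟫ := by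
  rw [((hasFDerivAt_quadratic_comp_bilinear B b p).const_mul c).fderiv]
  simp [inner_sub_left]

end QuadraticCompBilinear

noncomputable def utildeCLM :
    EuclideanSpace ℝ (Fin 2) →L[ℝ] EuclideanSpace ℝ (Fin 2) →L[ℝ] EuclideanSpace ℝ (Fin 4) :=
  LinearMap.toContinuousLinearMap <| LinearMap.toContinuousLinearMap.toLinearMap ∘ₗ
    LinearMap.mk₂ ℝ Utilde
      (fun _ _ _ => by ext i; fin_cases i <;> simp [Utilde] <;> ring)
      (fun _ _ _ => by ext i; fin_cases i <;> simp [Utilde] <;> ring)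
      (fun _ _ _ => by ext i; fin_cases i <;> simp [Utilde] <;> ring)
      (fun _ _ _ => by ext i; fin_cases i <;> simp [Utilde] <;> ring)

theorem fderiv_Fobj_apply (p v : EuclideanSpace ℝ (Fin 2) × EuclideanSpace ℝ (Fin 2)) :
    fderiv ℝ Fobj p v =
      1 / ‖bvec‖ ^ 2 * ⟪Utilde p.1 p.2 - bvec, Utilde p.1 v.2 + Utilde v.1 p.2⟫ :=
  fderiv_const_mul_quadratic_comp_bilinear_apply utildeCLM bvec _ p v

theorem fderiv_Fobj_apply_of_Utilde_eq {x y : EuclideanSpace ℝ (Fin 2)}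
    (hxy : Utilde x y = !₂[1, 1, 0, 0]) (v : EuclideanSpace ℝ (Fin 2) × EuclideanSpace ℝ (Fin 2)) :
    fderiv ℝ Fobj (x, y) v = -(1 / ‖bvec‖ ^ 2) * (x 1 * v.2 1 + v.1 1 * y 1) := by
  rw [fderiv_Fobj_apply, hxy]
  simp [Utilde, bvec, PiLp.inner_apply, Fin.sum_univ_four]
  ring

/-- The counterexample of Section 4: (a) `Ũ(e₁, e₁) = Ũ(e₂, e₁)`, (b) the total derivative of
`F` at `(e₁, e₁)` vanishes, (c) the total derivative of `F` at `(e₂, e₁)` does not vanish.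
Hence a tensor represented by a stationary parameter system can also be represented by a
non-stationary one. -/
theorem stmt_16 :
    Utilde !₂[1, 0] !₂[1, 0] = Utilde !₂[0, 1] !₂[1, 0] ∧
      fderiv ℝ Fobj (!₂[1, 0], !₂[1, 0]) = 0 ∧
      fderiv ℝ Fobj (!₂[0, 1], !₂[1, 0]) ≠ 0 := by
  have hU₁ : Utilde !₂[1, 0] !₂[1, 0] = !₂[1, 1, 0, 0] := by
    ext i; fin_cases i <;> simp [Utilde]
  have hU₂ : Utilde !₂[0, 1] !₂[1, 0] = !₂[1, 1, 0, 0] := by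
    ext i; fin_cases i <;> simp [Utilde]
  refine ⟨hU₁.trans hU₂.symm, ?_, fun h => ?_⟩
  · refine ContinuousLinearMap.ext fun v => ?_
    simp [fderiv_Fobj_apply_of_Utilde_eq hU₁]
  · have h' := DFunLike.congr_fun h (0, !₂[0, 1])
    simp [fderiv_Fobj_apply_of_Utilde_eq hU₂, bvec] at h'
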